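/- Let y > 1 be real and let P(y) = Π_{p ≤ y} p be the product of all primes not exceeding y. For every positive integer n, if P(y) ∣ σ(n), then φ(σ(n)) < σ(n)/log y. -/

import Mathlib

open Real Finset

/-- σ(n): sum of the positive divisors of n. -/
def sigma1 (n : ℕ) : ℕ := ∑ d ∈ n.divisors, d

/-- P(y): the product of all primes not exceeding y. -/
noncomputable def primorialReal (y : ℝ) : ℕ :=
  ∏ p ∈ (Finset.Icc 1 ⌊y⌋₊).filter Nat.Prime, p

/-- The completely multiplicative function `n ↦ (n : ℝ)⁻¹` as a monoid hom. -/
noncomputable def invHom : ℕ →* ℝ where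
  toFun n := (n : ℝ)⁻¹
  map_one' := by norm_num
  map_mul' a b := by push_cast; rw [mul_inv]

lemma primesIcc_eq_primesBelow (N : ℕ) :
    (Finset.Icc 1 N).filter Nat.Prime = (N + 1).primesBelow := by
  ext p
  simp only [Finset.mem_filter, Finset.mem_Icc, Nat.mem_primesBelow, Nat.lt_succ_iff]
  exact ⟨fun h => ⟨h.1.2, h.2⟩, fun h => ⟨⟨h.2.one_lt.le, h.1⟩, h.2⟩⟩

/-- Key analytic estimate: `log y < ∏_{p ≤ y} (1 - 1/p)⁻¹`. -/
lemma log_lt_prod_inv (y : ℝ) (hy : 1 < y) :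
    Real.log y < ∏ p ∈ (Finset.Icc 1 ⌊y⌋₊).filter Nat.Prime, (1 - (p : ℝ)⁻¹)⁻¹ := by
  set N := ⌊y⌋₊ with hN
  rw [primesIcc_eq_primesBelow]
  have hf : ∀ {p : ℕ}, p.Prime → ‖invHom p‖ < 1 := by
    intro p hp
    have h1 : (1:ℝ) < p := by exact_mod_cast hp.one_lt
    simp only [invHom, MonoidHom.coe_mk, OneHom.coe_mk, Real.norm_eq_abs,
      abs_inv, Nat.abs_cast]
    rw [inv_lt_one_iff₀]
    right; exact h1
  obtain ⟨-, hsum⟩ :=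
    EulerProduct.summable_and_hasSum_smoothNumbers_prod_primesBelow_geometric hf (N + 1)
  have hind : HasSum (Set.indicator ((N+1).smoothNumbers) (fun m : ℕ => invHom m))
      (∏ p ∈ (N+1).primesBelow, (1 - invHom p)⁻¹) :=
    hasSum_subtype_iff_indicator.mp hsum
  have hle : ∑ i ∈ Finset.Icc 1 N, (i : ℝ)⁻¹
      ≤ ∏ p ∈ (N+1).primesBelow, (1 - invHom p)⁻¹ := by
    have heq : ∀ i ∈ Finset.Icc 1 N,
        (i : ℝ)⁻¹ = Set.indicator ((N+1).smoothNumbers) (fun m : ℕ => invHom m) i := by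
      intro i hi
      rw [Finset.mem_Icc] at hi
      rw [Set.indicator_of_mem (Nat.mem_smoothNumbers_of_lt hi.1 (Nat.lt_succ_of_le hi.2))]
      rfl
    rw [Finset.sum_congr rfl heq]
    refine sum_le_hasSum _ (fun i _ => ?_) hind
    exact Set.indicator_nonneg (fun m _ => inv_nonneg.mpr (Nat.cast_nonneg m)) i
  have hlog : Real.log y < ∑ i ∈ Finset.Icc 1 N, (i : ℝ)⁻¹ := by
    have h1 : Real.log y < Real.log (N + 1) := by
      refine Real.log_lt_log (by linarith) ?_
      exact_mod_cast Nat.lt_floor_add_one y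
    have h2 : Real.log ((N : ℝ) + 1) ≤ (harmonic N : ℝ) := by
      have := log_add_one_le_harmonic N
      push_cast at this ⊢
      exact this
    have h3 : (harmonic N : ℝ) = ∑ i ∈ Finset.Icc 1 N, (i : ℝ)⁻¹ := by
      rw [harmonic_eq_sum_Icc]
      push_cast
      rfl
    linarith
  have : ∀ p ∈ (N+1).primesBelow, (1 - invHom p)⁻¹ = (1 - (p:ℝ)⁻¹)⁻¹ := fun p _ => rfl
  rw [Finset.prod_congr rfl this] at hle
  linarith

theorem primorial_dvd_sigma_totient_small (y : ℝ) (hy : 1 < y) (n : ℕ) (hn : 0 < n)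
    (hdvd : primorialReal y ∣ sigma1 n) :
    (Nat.totient (sigma1 n) : ℝ) < (sigma1 n : ℝ) / Real.log y := by
  set m := sigma1 n with hm
  have hm0 : 0 < m := by
    have hmem : n ∈ n.divisors := Nat.mem_divisors_self n hn.ne'
    exact lt_of_lt_of_le hn (Finset.single_le_sum (fun d _ => Nat.zero_le d) hmem)
  set S := (Finset.Icc 1 ⌊y⌋₊).filter Nat.Prime with hS
  -- S ⊆ prime factors of m
  have hsub : S ⊆ m.primeFactors := by
    intro p hp
    have hp' := hp
    rw [hS, Finset.mem_filter] at hp'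
    have hpdvd : p ∣ m := dvd_trans (Finset.dvd_prod_of_mem _ hp) hdvd
    exact Nat.mem_primeFactors.mpr ⟨hp'.2, hpdvd, hm0.ne'⟩
  have hpos : ∀ p ∈ m.primeFactors, (0:ℝ) < 1 - (p:ℝ)⁻¹ := by
    intro p hp
    have hp2 : (1:ℝ) < p := by exact_mod_cast (Nat.prime_of_mem_primeFactors hp).one_lt
    have : (p:ℝ)⁻¹ < 1 := inv_lt_one_of_one_lt₀ hp2
    linarith
  -- totient formula
  have htot : (Nat.totient m : ℝ) = m * ∏ p ∈ m.primeFactors, (1 - (p:ℝ)⁻¹) := by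
    have := Nat.totient_eq_mul_prod_factors m
    have h2 : ((Nat.totient m : ℚ) : ℝ) = ((m * ∏ p ∈ m.primeFactors, (1 - (p:ℚ)⁻¹) : ℚ) : ℝ) :=
      by exact_mod_cast congrArg (fun q : ℚ => (q : ℝ)) this
    push_cast at h2
    exact_mod_cast h2
  -- product over prime factors ≤ product over S
  have hprodle : ∏ p ∈ m.primeFactors, (1 - (p:ℝ)⁻¹) ≤ ∏ p ∈ S, (1 - (p:ℝ)⁻¹) := by
    rw [← Finset.prod_sdiff hsub]
    have h1 : ∏ p ∈ m.primeFactors \ S, (1 - (p:ℝ)⁻¹) ≤ 1 := by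
      refine Finset.prod_le_one (fun p hp => ?_) (fun p hp => ?_)
      · exact (hpos p (Finset.mem_sdiff.mp hp).1).le
      · have : (0:ℝ) ≤ (p:ℝ)⁻¹ := by positivity
        linarith
    have h2 : (0:ℝ) ≤ ∏ p ∈ S, (1 - (p:ℝ)⁻¹) :=
      Finset.prod_nonneg (fun p hp => (hpos p (hsub hp)).le)
    calc (∏ p ∈ m.primeFactors \ S, (1 - (p:ℝ)⁻¹)) * ∏ p ∈ S, (1 - (p:ℝ)⁻¹)
        ≤ 1 * ∏ p ∈ S, (1 - (p:ℝ)⁻¹) := mul_le_mul_of_nonneg_right h1 h2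
      _ = ∏ p ∈ S, (1 - (p:ℝ)⁻¹) := one_mul _
  set A := ∏ p ∈ S, (1 - (p:ℝ)⁻¹) with hA
  have hApos : 0 < A :=
    Finset.prod_pos (fun p hp => hpos p (hsub hp))
  have hkey : Real.log y < A⁻¹ := by
    have h := log_lt_prod_inv y hy
    have h2 : (∏ p ∈ S, (1 - (p:ℝ)⁻¹))⁻¹ = ∏ p ∈ S, (1 - (p:ℝ)⁻¹)⁻¹ :=
      (Finset.prod_inv_distrib _).symm
    rw [hA, h2]
    exact h
  have hlogpos : 0 < Real.log y := Real.log_pos hy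
  have hφ : (Nat.totient m : ℝ) ≤ m * A := by
    rw [htot]
    exact mul_le_mul_of_nonneg_left hprodle (by positivity)
  have hmA : (0:ℝ) < m * A := by
    have : (0:ℝ) < m := by exact_mod_cast hm0
    positivity
  have hchain : (Nat.totient m : ℝ) * Real.log y < m := by
    calc (Nat.totient m : ℝ) * Real.log y ≤ (m * A) * Real.log y :=
          mul_le_mul_of_nonneg_right hφ hlogpos.le
      _ < (m * A) * A⁻¹ := by exact mul_lt_mul_of_pos_left hkey hmA
      _ = m := by field_simp
  rw [lt_div_iff₀ hlogpos]
  exact hchain
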